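/- Let m ∈ ℕ, let L_k denote the k-fold iterated natural logarithm and 𝓛_m(t) = (L₁(t),…,L_m(t)). Let Q₀(z) = Σ_α c_α z^α be a real polynomial in m variables whose lexicographically largest multi-index α* with c_{α*} ≠ 0 satisfies |α*| ≥ 1 and c_{α*} > 0; let Q₁ be a real one-variable polynomial of degree d ≥ 1 with positive leading coefficient, let β > 0, and define ω(t) = Q₀(𝓛_m(Q₁(t^β))). Then: (i) there exists T > 0 such that ω is differentiable with ω'(t) > 0 for all t ≥ T (so each ω(t)^{−λ} is eventually positive and strictly decreasing); and (ii) for every λ > 0, |d/dt (ω(t)^{−λ})| = O(t^{−1}) as t → ∞, and consequently |d/dt (ω(t)^{−λ})| = O(ω(t)^{−μ}) as t → ∞ for every μ > 0. -/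

import Mathlib

open Filter

noncomputable def iterLog : ℕ → ℝ → ℝ
  | 0, t => t
  | k + 1, t => Real.log (iterLog k t)

/-!
Write `u(t) = Q₁(t^β)`, so that `ω = P ∘ u` with `P(y) = ∑ c_α M_α(y)` and
`M_α(y) = ∏ L_{i+1}(y)^{α_i}`. The logarithmic derivative of `M_α` is
`W_α(y) = ∑ α_i / (L₀ ⋯ L_{i+1})(y)`, and `0 ≤ y W_α(y) ≤ |α|`.

If `α` is lexicographically below `α*` and `i₀` is the first index where they differ, then
`M_α L_{i₀+1} ≤ M_{α*} L_{i₀+2}^{|α|}` and `L_{i₀+2} = log L_{i₀+1}`, so `M_α = o(M_{α*})`;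
moreover `W_α ≤ |α| W_{α*}`, so also `M_α W_α = o(M_{α*} W_{α*})`. Hence `P` and `P'` are
comparable to their leading terms `c_{α*} M_{α*}` and `c_{α*} M_{α*} W_{α*}`, which gives
`0 < y P'(y) ≤ 4 |α*| P(y)` and `P(y) = O((log y)^{|α*|})`.

Since `t u'(t) / u(t) → β deg Q₁`, the chain rule gives `0 < t ω'(t) ≤ C ω(t)`. Therefore
`|d/dt ω^{-λ}| = λ ω^{-λ} ω'/ω = O(1/t)`, and `ω^μ = O((log t)^{μ |α*|}) = o(t)`.
-/

open Real Finset Asymptotics Topology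

theorem HasDerivAt.finsetProd_of_ne_zero {ι : Type*} [DecidableEq ι] {s : Finset ι}
    {f : ι → ℝ → ℝ} {f' : ι → ℝ} {x : ℝ} (hf : ∀ i ∈ s, HasDerivAt (f i) (f' i) x)
    (hf0 : ∀ i ∈ s, f i x ≠ 0) :
    HasDerivAt (fun y => ∏ i ∈ s, f i y) ((∏ i ∈ s, f i x) * ∑ i ∈ s, f' i / f i x) x := by
  refine (HasDerivAt.fun_finsetProd hf).congr_deriv ?_
  rw [mul_sum]
  refine sum_congr rfl fun i hi => ?_
  rw [smul_eq_mul, ← prod_erase_mul s _ hi]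
  field_simp [hf0 i hi]

theorem Asymptotics.isLittleO_of_le_mul {α : Type*} {l : Filter α} {f g r : α → ℝ}
    (hr : Tendsto r l (𝓝 0)) (h : ∀ᶠ x in l, ‖f x‖ ≤ r x * ‖g x‖) : f =o[l] g :=
  IsLittleO.of_bound fun _ hc => by
    filter_upwards [h, hr.eventually (gt_mem_nhds hc)] with x hx hrx
    exact hx.trans (mul_le_mul_of_nonneg_right hrx.le (norm_nonneg _))

theorem eventually_le_sum_le_of_isLittleO {ι α : Type*} [DecidableEq ι] {l : Filter α}
    {s : Finset ι} {i₀ : ι} (hi₀ : i₀ ∈ s) {a : ι → ℝ} (ha : 0 < a i₀) {f : ι → α → ℝ}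
    (hf : ∀ᶠ x in l, 0 ≤ f i₀ x) (hdom : ∀ i ∈ s, a i ≠ 0 → i ≠ i₀ → f i =o[l] f i₀) :
    ∀ᶠ x in l, a i₀ / 2 * f i₀ x ≤ ∑ i ∈ s, a i * f i x ∧
      ∑ i ∈ s, a i * f i x ≤ 2 * a i₀ * f i₀ x := by
  have hrest : (fun x => ∑ i ∈ s.erase i₀, a i * f i x) =o[l] f i₀ := by
    refine IsLittleO.fun_sum fun i hi => ?_
    obtain ⟨hne, hi⟩ := mem_erase.1 hi
    rcases eq_or_ne (a i) 0 with h0 | h0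
    · simp [h0]
    · exact (hdom i hi h0 hne).const_mul_left (a i)
  filter_upwards [hrest.def (half_pos ha), hf] with x hx hfx
  rw [Real.norm_of_nonneg hfx, Real.norm_eq_abs] at hx
  rw [← add_sum_erase s _ hi₀]
  have := mul_nonneg ha.le hfx
  constructor <;> linarith [abs_le.1 hx]

noncomputable def iterLogProd (k : ℕ) (y : ℝ) : ℝ := ∏ j ∈ range k, iterLog j y

theorem iterLogProd_succ (k : ℕ) (y : ℝ) :
    iterLogProd (k + 1) y = iterLogProd k y * iterLog k y :=
  prod_range_succ _ _

namespace iterLog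

theorem zero_eq : iterLog 0 = id := rfl

theorem succ_eq (k : ℕ) : iterLog (k + 1) = fun y => log (iterLog k y) := rfl

theorem tendsto_atTop (k : ℕ) : Tendsto (iterLog k) atTop atTop := by
  induction k with
  | zero => exact tendsto_id
  | succ k ih => exact tendsto_log_atTop.comp ih

theorem eventually_one_le (n : ℕ) : ∀ᶠ y in atTop, ∀ j ≤ n, 1 ≤ iterLog j y := by
  simp only [← Finset.mem_range_succ_iff]
  exact (eventually_all_finset _).2 fun j _ => (tendsto_atTop j).eventually_ge_atTop 1

theorem succ_le {k : ℕ} {y : ℝ} (h : 0 < iterLog k y) : iterLog (k + 1) y ≤ iterLog k y :=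
  (log_le_sub_one_of_pos h).trans (by linarith)

theorem antitone_of_one_le {n : ℕ} {y : ℝ} (h : ∀ j ≤ n, 1 ≤ iterLog j y) {i j : ℕ}
    (hij : i ≤ j) (hj : j ≤ n) : iterLog j y ≤ iterLog i y := by
  induction j, hij using Nat.le_induction with
  | base => rfl
  | succ j _ ih => exact (succ_le (by linarith [h j (by omega)])).trans (ih (by omega))

theorem hasDerivAt {k : ℕ} {y : ℝ} (h : ∀ j < k, iterLog j y ≠ 0) :
    HasDerivAt (iterLog k) (iterLogProd k y)⁻¹ y := by
  induction k with
  | zero => simpa [zero_eq, iterLogProd] using hasDerivAt_id y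
  | succ k ih =>
    rw [succ_eq, iterLogProd_succ, mul_inv_rev, ← div_eq_inv_mul]
    exact (ih fun j hj => h j (by omega)).log (h k (by omega))

end iterLog

section iterLogProd

variable {n : ℕ} {y : ℝ}

theorem iterLogProd_mono (h : ∀ j ≤ n, 1 ≤ iterLog j y) {k l : ℕ} (hkl : k ≤ l)
    (hl : l ≤ n + 1) : iterLogProd k y ≤ iterLogProd l y := by
  induction l, hkl using Nat.le_induction with
  | base => rfl
  | succ l hkl ih =>
    have hl1 : 1 ≤ iterLog l y := h l (by omega)
    have hP : 1 ≤ iterLogProd l y := one_le_prod fun j hj => h j (by simp at hj; omega)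
    rw [iterLogProd_succ]
    nlinarith [ih (by omega)]

theorem one_le_iterLogProd (h : ∀ j ≤ n, 1 ≤ iterLog j y) {k : ℕ} (hk : k ≤ n + 1) :
    1 ≤ iterLogProd k y :=
  iterLogProd_mono h (Nat.zero_le k) hk

theorem iterLogProd_pos (h : ∀ j ≤ n, 1 ≤ iterLog j y) {k : ℕ} (hk : k ≤ n + 1) :
    0 < iterLogProd k y :=
  zero_lt_one.trans_le (one_le_iterLogProd h hk)

theorem le_iterLogProd (h : ∀ j ≤ n, 1 ≤ iterLog j y) {k : ℕ} (hk : 1 ≤ k) (hkn : k ≤ n + 1) :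
    y ≤ iterLogProd k y := by
  simpa [iterLogProd, iterLog] using iterLogProd_mono h hk hkn

end iterLogProd

section logMonomial

variable {m : ℕ} {y : ℝ}

noncomputable def logMonomial (α : Fin m → ℕ) (y : ℝ) : ℝ :=
  ∏ i : Fin m, iterLog ((i : ℕ) + 1) y ^ α i

noncomputable def logMonomialLogDeriv (α : Fin m → ℕ) (y : ℝ) : ℝ :=
  ∑ i : Fin m, (α i : ℝ) / iterLogProd ((i : ℕ) + 2) y

theorem one_le_logMonomial (h : ∀ j ≤ m, 1 ≤ iterLog j y) (α : Fin m → ℕ) :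
    1 ≤ logMonomial α y :=
  one_le_prod fun i _ => one_le_pow₀ (h _ i.isLt)

theorem logMonomial_le_log_pow (h : ∀ j ≤ m, 1 ≤ iterLog j y) (α : Fin m → ℕ) :
    logMonomial α y ≤ log y ^ ∑ i, α i := by
  rw [← prod_pow_eq_pow_sum]
  refine prod_le_prod (fun i _ => by linarith [one_le_pow₀ (n := α i) (h _ i.isLt)])
    fun i _ => pow_le_pow_left₀ (by linarith [h _ i.isLt]) ?_ _
  exact iterLog.antitone_of_one_le h (i := 1) (by omega) i.isLt

theorem hasDerivAt_logMonomial (h : ∀ j ≤ m, 1 ≤ iterLog j y) (α : Fin m → ℕ) :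
    HasDerivAt (logMonomial α) (logMonomial α y * logMonomialLogDeriv α y) y := by
  have hpos : ∀ j ≤ m, 0 < iterLog j y := fun j hj => by linarith [h j hj]
  have hderiv : ∀ i ∈ (univ : Finset (Fin m)),
      HasDerivAt (fun y => iterLog ((i : ℕ) + 1) y ^ α i)
        (α i * iterLog ((i : ℕ) + 1) y ^ (α i - 1) * (iterLogProd ((i : ℕ) + 1) y)⁻¹) y :=
    fun i _ => (iterLog.hasDerivAt fun j hj => (hpos j (by omega)).ne').fun_pow _
  unfold logMonomial
  refine (HasDerivAt.finsetProd_of_ne_zero hderiv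
    fun i _ => (pow_pos (hpos _ i.isLt) _).ne').congr_deriv ?_
  refine congrArg _ (sum_congr rfl fun i _ => ?_)
  have hL := (hpos _ i.isLt).ne'
  have hP := (iterLogProd_pos h (k := (i : ℕ) + 1) (by omega)).ne'
  rw [iterLogProd_succ ((i : ℕ) + 1)]
  rcases α i with _ | k
  · simp
  · rw [pow_succ, Nat.add_sub_cancel]
    field_simp

theorem logMonomialLogDeriv_nonneg (h : ∀ j ≤ m, 1 ≤ iterLog j y) (α : Fin m → ℕ) :
    0 ≤ logMonomialLogDeriv α y :=
  sum_nonneg fun i _ => div_nonneg (Nat.cast_nonneg _) (iterLogProd_pos h (by omega)).le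

theorem mul_logMonomialLogDeriv_le (h : ∀ j ≤ m, 1 ≤ iterLog j y) (α : Fin m → ℕ) :
    y * logMonomialLogDeriv α y ≤ ∑ i, (α i : ℝ) := by
  rw [logMonomialLogDeriv, mul_sum]
  refine sum_le_sum fun i _ => ?_
  rw [mul_div_left_comm]
  refine mul_le_of_le_one_right (Nat.cast_nonneg _) ?_
  exact (div_le_one (iterLogProd_pos h (by omega))).2 (le_iterLogProd h (by omega) (by omega))

theorem inv_iterLogProd_le_logMonomialLogDeriv (h : ∀ j ≤ m, 1 ≤ iterLog j y)
    {α : Fin m → ℕ} {i : Fin m} (hi : α i ≠ 0) :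
    (iterLogProd ((i : ℕ) + 2) y)⁻¹ ≤ logMonomialLogDeriv α y := by
  refine le_trans ?_ (single_le_sum (fun j _ => div_nonneg (Nat.cast_nonneg _)
    (iterLogProd_pos h (by omega)).le) (mem_univ i))
  rw [← one_div]
  gcongr
  · exact (iterLogProd_pos h (by omega)).le
  · exact_mod_cast Nat.one_le_iff_ne_zero.2 hi

theorem logMonomialLogDeriv_le_of_lt (h : ∀ j ≤ m, 1 ≤ iterLog j y) {α αs : Fin m → ℕ}
    (hlt : toLex α < toLex αs) :
    logMonomialLogDeriv α y ≤ (∑ i, (α i : ℝ)) * logMonomialLogDeriv αs y := by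
  obtain ⟨i₀, hagree, hi₀⟩ := hlt
  have key : ∀ i, α i ≠ 0 → (iterLogProd ((i : ℕ) + 2) y)⁻¹ ≤ logMonomialLogDeriv αs y := by
    intro i hi
    rcases lt_or_ge i i₀ with hii₀ | hii₀
    · have hs : αs i = α i := (hagree i hii₀).symm
      exact inv_iterLogProd_le_logMonomialLogDeriv h (hs ▸ hi)
    · calc (iterLogProd ((i : ℕ) + 2) y)⁻¹ ≤ (iterLogProd ((i₀ : ℕ) + 2) y)⁻¹ :=
            inv_anti₀ (iterLogProd_pos h (by omega))
              (iterLogProd_mono h (by simpa using hii₀) (by omega))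
        _ ≤ logMonomialLogDeriv αs y :=
            inv_iterLogProd_le_logMonomialLogDeriv h (Nat.ne_zero_of_lt hi₀)
  rw [logMonomialLogDeriv, sum_mul]
  refine sum_le_sum fun i _ => ?_
  rcases eq_or_ne (α i) 0 with h0 | h0
  · simp [h0]
  · rw [div_eq_mul_inv]
    exact mul_le_mul_of_nonneg_left (key i h0) (Nat.cast_nonneg _)

theorem logMonomial_mul_iterLog_le (h : ∀ j ≤ m + 1, 1 ≤ iterLog j y) {α αs : Fin m → ℕ}
    {i₀ : Fin m} (hagree : ∀ j < i₀, α j = αs j) (hlt : α i₀ < αs i₀) :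
    logMonomial α y * iterLog ((i₀ : ℕ) + 1) y ≤
      logMonomial αs y * iterLog ((i₀ : ℕ) + 2) y ^ ∑ i, α i := by
  set ℓ := iterLog ((i₀ : ℕ) + 1) y
  set L := iterLog ((i₀ : ℕ) + 2) y
  have hℓ : 1 ≤ ℓ := h _ (by omega)
  have hL : 1 ≤ L := h _ (by omega)
  have key : ∀ i : Fin m, iterLog ((i : ℕ) + 1) y ^ α i * (if i = i₀ then ℓ else 1) ≤
      iterLog ((i : ℕ) + 1) y ^ αs i * L ^ α i := by
    intro i
    have hi : 1 ≤ iterLog ((i : ℕ) + 1) y := h _ (by omega)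
    rcases lt_trichotomy i i₀ with hii₀ | rfl | hii₀
    · rw [if_neg hii₀.ne, hagree i hii₀, mul_one]
      exact le_mul_of_one_le_right (by positivity) (one_le_pow₀ hL)
    · rw [if_pos rfl, ← pow_succ]
      exact (pow_le_pow_right₀ hi hlt).trans (le_mul_of_one_le_right (by positivity)
        (one_le_pow₀ hL))
    · rw [if_neg hii₀.ne', mul_one]
      have hiL : iterLog ((i : ℕ) + 1) y ≤ L :=
        iterLog.antitone_of_one_le h (by simpa using hii₀) (by omega)
      exact (pow_le_pow_left₀ (by positivity) hiL _).trans
        (le_mul_of_one_le_left (by positivity) (one_le_pow₀ hi))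
  calc logMonomial α y * ℓ
      = ∏ i : Fin m, iterLog ((i : ℕ) + 1) y ^ α i * (if i = i₀ then ℓ else 1) := by
        rw [prod_mul_distrib, prod_ite_eq' univ i₀, if_pos (mem_univ _), logMonomial]
    _ ≤ ∏ i : Fin m, iterLog ((i : ℕ) + 1) y ^ αs i * L ^ α i :=
        prod_le_prod (fun i _ => mul_nonneg
          (pow_nonneg (by linarith [h ((i : ℕ) + 1) (by omega)]) _)
          (by split_ifs <;> linarith)) fun i _ => key i
    _ = logMonomial αs y * L ^ ∑ i, α i := by
        rw [prod_mul_distrib, prod_pow_eq_pow_sum, logMonomial]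

variable {α αs : Fin m → ℕ}

theorem isLittleO_logMonomial_of_lt (hlt : toLex α < toLex αs) :
    logMonomial α =o[atTop] logMonomial αs := by
  obtain ⟨i₀, hagree, hi₀⟩ := id hlt
  have hr : Tendsto (fun y => iterLog ((i₀ : ℕ) + 2) y ^ (∑ i, α i) / iterLog ((i₀ : ℕ) + 1) y)
      atTop (𝓝 0) :=
    isLittleO_pow_log_id_atTop.tendsto_div_nhds_zero.comp (iterLog.tendsto_atTop _)
  refine isLittleO_of_le_mul hr ?_
  filter_upwards [iterLog.eventually_one_le (m + 1)] with y h
  have hm := fun j hj => h j (Nat.le_succ_of_le hj)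
  have hℓ : 0 < iterLog ((i₀ : ℕ) + 1) y := zero_lt_one.trans_le (h _ (by omega))
  rw [Real.norm_of_nonneg (zero_le_one.trans (one_le_logMonomial hm α)),
    Real.norm_of_nonneg (zero_le_one.trans (one_le_logMonomial hm αs)), div_mul_eq_mul_div,
    le_div_iff₀ hℓ, mul_comm _ (logMonomial αs y)]
  exact logMonomial_mul_iterLog_le h hagree hi₀

theorem isLittleO_logMonomial_mul_logDeriv_of_lt (hlt : toLex α < toLex αs) :
    (fun y => logMonomial α y * logMonomialLogDeriv α y) =o[atTop]
      fun y => logMonomial αs y * logMonomialLogDeriv αs y := by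
  refine (isLittleO_logMonomial_of_lt hlt).mul_isBigO (IsBigO.of_bound (∑ i, (α i : ℝ)) ?_)
  filter_upwards [iterLog.eventually_one_le m] with y h
  rw [Real.norm_of_nonneg (logMonomialLogDeriv_nonneg h α),
    Real.norm_of_nonneg (logMonomialLogDeriv_nonneg h αs)]
  exact logMonomialLogDeriv_le_of_lt h hlt

end logMonomial

section logPoly

variable {m : ℕ} (A : Finset (Fin m → ℕ)) (c : (Fin m → ℕ) → ℝ)

noncomputable def logPoly (y : ℝ) : ℝ := ∑ α ∈ A, c α * logMonomial α y

noncomputable def logPolyDeriv (y : ℝ) : ℝ :=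
  ∑ α ∈ A, c α * (logMonomial α y * logMonomialLogDeriv α y)

theorem hasDerivAt_logPoly {y : ℝ} (h : ∀ j ≤ m, 1 ≤ iterLog j y) :
    HasDerivAt (logPoly A c) (logPolyDeriv A c y) y :=
  HasDerivAt.fun_sum fun α _ => (hasDerivAt_logMonomial h α).const_mul (c α)

variable {A c} {αs : Fin m → ℕ}

theorem eventually_logPoly_bounds (hαs : αs ∈ A) (hc : 0 < c αs)
    (hmax : ∀ α ∈ A, c α ≠ 0 → α ≠ αs → toLex α < toLex αs) : ∀ᶠ y in atTop,
    c αs / 2 * logMonomial αs y ≤ logPoly A c y ∧ logPoly A c y ≤ 2 * c αs * logMonomial αs y :=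
  eventually_le_sum_le_of_isLittleO hαs hc
    ((iterLog.eventually_one_le m).mono fun _ h => zero_le_one.trans (one_le_logMonomial h αs))
    fun α hα h0 hne => isLittleO_logMonomial_of_lt (hmax α hα h0 hne)

theorem eventually_logPolyDeriv_bounds (hαs : αs ∈ A) (hc : 0 < c αs)
    (hmax : ∀ α ∈ A, c α ≠ 0 → α ≠ αs → toLex α < toLex αs) : ∀ᶠ y in atTop,
    c αs / 2 * (logMonomial αs y * logMonomialLogDeriv αs y) ≤ logPolyDeriv A c y ∧
      logPolyDeriv A c y ≤ 2 * c αs * (logMonomial αs y * logMonomialLogDeriv αs y) :=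
  eventually_le_sum_le_of_isLittleO hαs hc
    ((iterLog.eventually_one_le m).mono fun _ h => mul_nonneg
      (zero_le_one.trans (one_le_logMonomial h αs)) (logMonomialLogDeriv_nonneg h αs))
    fun α hα h0 hne => isLittleO_logMonomial_mul_logDeriv_of_lt (hmax α hα h0 hne)

theorem logPoly_isBigO (hαs : αs ∈ A) (hc : 0 < c αs)
    (hmax : ∀ α ∈ A, c α ≠ 0 → α ≠ αs → toLex α < toLex αs) :
    logPoly A c =O[atTop] fun y => log y ^ ∑ i, αs i := by
  refine IsBigO.of_bound (2 * c αs) ?_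
  filter_upwards [eventually_logPoly_bounds hαs hc hmax, iterLog.eventually_one_le m]
    with y ⟨hlow, hup⟩ h
  have hM := one_le_logMonomial h αs
  have hlog : 0 ≤ log y := log_nonneg (h 0 (Nat.zero_le m))
  rw [Real.norm_of_nonneg (by nlinarith), Real.norm_of_nonneg (by positivity)]
  exact hup.trans (mul_le_mul_of_nonneg_left (logMonomial_le_log_pow h αs) (by positivity))

theorem eventually_hasDerivAt_logPoly_bounds (hαs : αs ∈ A) (hc : 0 < c αs)
    (hmax : ∀ α ∈ A, c α ≠ 0 → α ≠ αs → toLex α < toLex αs) (hdeg : 1 ≤ ∑ i, αs i) :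
    ∀ᶠ y in atTop, HasDerivAt (logPoly A c) (logPolyDeriv A c y) y ∧
      0 < logPolyDeriv A c y ∧
      y * logPolyDeriv A c y ≤ 4 * (∑ i, (αs i : ℝ)) * logPoly A c y ∧
      c αs / 2 ≤ logPoly A c y := by
  obtain ⟨i, -, hi⟩ := exists_ne_zero_of_sum_ne_zero (by omega : ∑ i, αs i ≠ 0)
  filter_upwards [iterLog.eventually_one_le m, eventually_logPoly_bounds hαs hc hmax,
    eventually_logPolyDeriv_bounds hαs hc hmax] with y h ⟨hP, hP'⟩ ⟨hG, hG'⟩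
  have hM := one_le_logMonomial h αs
  have hW : 0 < logMonomialLogDeriv αs y := (inv_pos.2 (iterLogProd_pos h (by omega))).trans_le
    (inv_iterLogProd_le_logMonomialLogDeriv h hi)
  have hyW := mul_logMonomialLogDeriv_le h αs
  have hy : 0 ≤ y := zero_le_one.trans (h 0 (Nat.zero_le m))
  refine ⟨hasDerivAt_logPoly A c h, hG.trans_lt' (by positivity), ?_, by nlinarith⟩
  calc y * logPolyDeriv A c y
      ≤ 2 * c αs * logMonomial αs y * (y * logMonomialLogDeriv αs y) := by
        nlinarith [mul_le_mul_of_nonneg_left hG' hy]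
    _ ≤ 2 * c αs * logMonomial αs y * ∑ i, (αs i : ℝ) :=
        mul_le_mul_of_nonneg_left hyW (by positivity)
    _ ≤ 4 * (∑ i, (αs i : ℝ)) * logPoly A c y := by
        have : 0 ≤ ∑ i, (αs i : ℝ) := by positivity
        nlinarith

end logPoly

namespace Polynomial

theorem tendsto_mul_derivative_div_atTop (Q : ℝ[X]) (hQ : Q.natDegree ≠ 0) :
    Tendsto (fun x => x * Q.derivative.eval x / Q.eval x) atTop (𝓝 Q.natDegree) := by
  have hQ0 : Q ≠ 0 := by rintro rfl; simp at hQ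
  have hdeg : (Q.derivative * X).degree = Q.degree := by
    rw [degree_mul_X, degree_derivative hQ, degree_eq_natDegree hQ0]
    norm_cast
    omega
  have := div_tendsto_atTop_leadingCoeff_div_of_degree_eq _ _ hdeg
  simp only [eval_mul, eval_X, leadingCoeff_mul_X, leadingCoeff_derivative] at this
  rw [mul_div_cancel_left₀ _ (leadingCoeff_ne_zero.2 hQ0)] at this
  simpa only [mul_comm] using this

theorem eventually_hasDerivAt_eval_rpow (Q : ℝ[X]) (hQ : Q.natDegree ≠ 0)
    (hlc : 0 < Q.leadingCoeff) {β : ℝ} (hβ : 0 < β) :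
    ∀ᶠ t in atTop, ∃ v, HasDerivAt (fun s => Q.eval (s ^ β)) v t ∧ 0 < v ∧
      t * v ≤ β * (Q.natDegree + 1) * Q.eval (t ^ β) := by
  have hQpos : ∀ᶠ x in atTop, 0 < Q.eval x :=
    (Q.tendsto_atTop_of_leadingCoeff_nonneg (natDegree_pos_iff_degree_pos.1
      (Nat.pos_of_ne_zero hQ)) hlc.le).eventually_gt_atTop 0
  have hratio := Q.tendsto_mul_derivative_div_atTop hQ
  filter_upwards [(tendsto_rpow_atTop hβ).eventually (hQpos.and
    ((hratio.eventually_const_lt (by positivity : (0 : ℝ) < Q.natDegree)).and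
    ((hratio.eventually_lt_const (lt_add_one (Q.natDegree : ℝ))).and
    (eventually_gt_atTop 0)))), eventually_gt_atTop 0]
    with t ⟨hQt, hlo, hhi, hx⟩ ht
  refine ⟨_, (Q.hasDerivAt _).comp t (hasDerivAt_rpow_const (Or.inl ht.ne')), ?_, ?_⟩
  · have hQ' : 0 < Q.derivative.eval (t ^ β) :=
      pos_of_mul_pos_right (div_pos_iff_of_pos_right hQt |>.1 hlo) hx.le
    have := rpow_pos_of_pos ht (β - 1)
    positivity
  · have htβ : t * t ^ (β - 1) = t ^ β := by
      rw [rpow_sub_one ht.ne']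
      field_simp
    have := (div_lt_iff₀ hQt).1 hhi
    calc t * (Q.derivative.eval (t ^ β) * (β * t ^ (β - 1)))
        = β * (t ^ β * Q.derivative.eval (t ^ β)) := by rw [← htβ]; ring
      _ ≤ β * (Q.natDegree + 1) * Q.eval (t ^ β) := by nlinarith

theorem isBigO_log_eval_rpow (Q : ℝ[X]) (hQ : Q.natDegree ≠ 0) (hlc : 0 < Q.leadingCoeff)
    {β : ℝ} (hβ : 0 < β) : (fun t => log (Q.eval (t ^ β))) =O[atTop] log := by
  have hdeg : Q.degree < (X ^ (Q.natDegree + 1) : ℝ[X]).degree := by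
    rw [degree_X_pow, degree_eq_natDegree (by rintro rfl; simp at hQ)]
    exact_mod_cast Nat.lt_succ_self _
  have hQ1 : ∀ᶠ x in atTop, 1 ≤ Q.eval x :=
    (Q.tendsto_atTop_of_leadingCoeff_nonneg (natDegree_pos_iff_degree_pos.1
      (Nat.pos_of_ne_zero hQ)) hlc.le).eventually_ge_atTop 1
  refine IsBigO.of_bound ((Q.natDegree + 1) * β) ?_
  filter_upwards [(tendsto_rpow_atTop hβ).eventually
    (hQ1.and ((isLittleO_atTop_of_degree_lt _ _ hdeg).bound one_pos)), eventually_ge_atTop 1]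
    with t ⟨hQt, hle⟩ ht
  have hx : 0 < t ^ β := rpow_pos_of_pos (by linarith) β
  simp only [eval_pow, eval_X, one_mul, Real.norm_eq_abs] at hle
  rw [abs_of_pos (by linarith), abs_of_pos (by positivity)] at hle
  rw [Real.norm_of_nonneg (log_nonneg hQt), Real.norm_of_nonneg (log_nonneg ht), mul_assoc,
    ← log_rpow (by linarith), ← Nat.cast_succ, ← log_pow]
  exact log_le_log (by linarith) hle

end Polynomial

theorem eventually_rpow_le_self {f : ℝ → ℝ} {N : ℕ} (hf : f =O[atTop] fun t => log t ^ N)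
    (hf0 : ∀ᶠ t in atTop, 0 ≤ f t) {μ : ℝ} (hμ : 0 < μ) : ∀ᶠ t in atTop, f t ^ μ ≤ t := by
  have hlog : (fun t => log t ^ N) =o[atTop] fun t => t ^ μ⁻¹ := by
    simpa using isLittleO_log_rpow_rpow_atTop N (inv_pos.2 hμ)
  filter_upwards [(hf.trans_isLittleO hlog).bound one_pos, hf0, eventually_ge_atTop 0]
    with t hle hf0 ht
  rw [one_mul, Real.norm_of_nonneg hf0, Real.norm_of_nonneg (by positivity)] at hle
  calc f t ^ μ ≤ (t ^ μ⁻¹) ^ μ := rpow_le_rpow hf0 hle hμ.le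
    _ = t := rpow_inv_rpow ht hμ.ne'

theorem abs_deriv_rpow_neg_le {f : ℝ → ℝ} {f' t b K lam : ℝ} (hf : HasDerivAt f f' t)
    (ht : 0 < t) (hb : 0 < b) (hbf : b ≤ f t) (hf' : 0 ≤ f') (hK : t * f' ≤ K * f t)
    (hlam : 0 < lam) : |deriv (fun s => f s ^ (-lam)) t| ≤ lam * K * b ^ (-lam) * t⁻¹ := by
  have hf0 : 0 < f t := hb.trans_le hbf
  have hK0 : 0 ≤ K := nonneg_of_mul_nonneg_left ((mul_nonneg ht.le hf').trans hK) hf0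
  have hpow : 0 < f t ^ (-lam - 1) := rpow_pos_of_pos hf0 _
  rw [(hf.rpow_const (Or.inl hf0.ne')).deriv, abs_mul, abs_mul, abs_neg, abs_of_nonneg hf',
    abs_of_pos hlam, abs_of_pos hpow]
  calc f' * lam * f t ^ (-lam - 1) = lam * (t * f') * f t ^ (-lam - 1) * t⁻¹ := by
        field_simp
    _ ≤ lam * (K * f t) * f t ^ (-lam - 1) * t⁻¹ := by gcongr
    _ = lam * K * f t ^ (-lam) * t⁻¹ := by
        rw [rpow_sub_one hf0.ne']
        field_simp
    _ ≤ lam * K * b ^ (-lam) * t⁻¹ := by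
        have := rpow_le_rpow_of_nonpos hb hbf (by linarith : -lam ≤ 0)
        gcongr

theorem exists_deriv_pos_strictAntiOn_rpow_neg {ω : ℝ → ℝ}
    (h : ∀ᶠ t in atTop, 0 < ω t ∧ ∃ ω', HasDerivAt ω ω' t ∧ 0 < ω') :
    ∃ T > (0 : ℝ), (∀ t ≥ T, 0 < ω t) ∧ (∀ t ≥ T, DifferentiableAt ℝ ω t ∧ 0 < deriv ω t) ∧
      ∀ lam > (0 : ℝ), (∀ t ≥ T, 0 < ω t ^ (-lam)) ∧
        StrictAntiOn (fun s => ω s ^ (-lam)) (Set.Ici T) := by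
  obtain ⟨T₀, hT₀⟩ := eventually_atTop.1 h
  have hT : ∀ t ≥ max T₀ 1, 0 < ω t ∧ ∃ ω', HasDerivAt ω ω' t ∧ 0 < ω' :=
    fun t ht => hT₀ t (le_of_max_le_left ht)
  have hderiv : ∀ t ≥ max T₀ 1, DifferentiableAt ℝ ω t ∧ 0 < deriv ω t := fun t ht => by
    obtain ⟨-, ω', hω', hpos⟩ := hT t ht
    exact ⟨hω'.differentiableAt, hω'.deriv ▸ hpos⟩
  have hmono : StrictMonoOn ω (Set.Ici (max T₀ 1)) :=
    strictMonoOn_of_deriv_pos (convex_Ici _)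
      (fun t ht => (hderiv t ht).1.continuousAt.continuousWithinAt)
      fun t ht => (hderiv t (interior_subset ht)).2
  refine ⟨max T₀ 1, by positivity, fun t ht => (hT t ht).1, hderiv, fun lam hlam =>
    ⟨fun t ht => rpow_pos_of_pos (hT t ht).1 _, fun s hs t ht hst => ?_⟩⟩
  exact rpow_lt_rpow_of_neg (hT s hs).1 (hmono hs ht hst) (neg_neg_of_pos hlam)

theorem deriv_rpow_neg_bounds {ω : ℝ → ℝ} {b K : ℝ} (hb : 0 < b)
    (h : ∀ᶠ t in atTop, b ≤ ω t ∧ ∃ ω', HasDerivAt ω ω' t ∧ 0 < ω' ∧ t * ω' ≤ K * ω t)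
    (hgrowth : ∀ μ > (0 : ℝ), ∀ᶠ t in atTop, ω t ^ μ ≤ t) {lam : ℝ} (hlam : 0 < lam) :
    (∃ C > (0 : ℝ), ∃ T₀ : ℝ, ∀ t ≥ T₀,
        |deriv (fun s : ℝ => ω s ^ (-lam)) t| ≤ C * t⁻¹) ∧
      ∀ μ > (0 : ℝ), ∃ C > (0 : ℝ), ∃ T₀ : ℝ, ∀ t ≥ T₀,
        |deriv (fun s : ℝ => ω s ^ (-lam)) t| ≤ C * ω t ^ (-μ) := by
  have hC : 0 < lam * max K 1 * b ^ (-lam) := by positivity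
  have hbound : ∀ᶠ t in atTop, b ≤ ω t ∧
      |deriv (fun s : ℝ => ω s ^ (-lam)) t| ≤ lam * max K 1 * b ^ (-lam) * t⁻¹ := by
    filter_upwards [h, eventually_gt_atTop 0] with t ⟨hbω, ω', hω', hpos, hK⟩ ht
    refine ⟨hbω, abs_deriv_rpow_neg_le hω' ht hb hbω hpos.le (hK.trans ?_) hlam⟩
    exact mul_le_mul_of_nonneg_right (le_max_left K 1) (hb.trans_le hbω).le
  refine ⟨⟨_, hC, eventually_atTop.1 (hbound.mono fun t ht => ht.2)⟩, fun μ hμ => ?_⟩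
  refine ⟨_, hC, eventually_atTop.1 ?_⟩
  filter_upwards [hbound, hgrowth μ hμ] with t ⟨hbω, hle⟩ hωμ
  refine hle.trans (mul_le_mul_of_nonneg_left ?_ hC.le)
  rw [rpow_neg (hb.trans_le hbω).le]
  exact inv_anti₀ (rpow_pos_of_pos (hb.trans_le hbω) μ) hωμ

theorem stmt7_general (m : ℕ)
    (A : Finset (Fin m → ℕ)) (c : (Fin m → ℕ) → ℝ)
    (αs : Fin m → ℕ) (hαsA : αs ∈ A) (hcαs : 0 < c αs)
    (hdeg : 1 ≤ ∑ i, αs i)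
    (hmax : ∀ α ∈ A, c α ≠ 0 → α ≠ αs →
      ∃ i : Fin m, (∀ j : Fin m, j < i → α j = αs j) ∧ α i < αs i)
    (Q₁ : Polynomial ℝ) (hd : 1 ≤ Q₁.natDegree) (hlc : 0 < Q₁.leadingCoeff)
    (β : ℝ) (hβ : 0 < β)
    (ω : ℝ → ℝ)
    (hω : ∀ t : ℝ, ω t = ∑ α ∈ A, c α * ∏ i : Fin m,
      (iterLog ((i : ℕ) + 1) (Q₁.eval (t ^ β))) ^ (α i)) :
    (∃ T > (0:ℝ), (∀ t ≥ T, 0 < ω t) ∧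
      (∀ t ≥ T, DifferentiableAt ℝ ω t ∧ 0 < deriv ω t) ∧
      ∀ lam > (0:ℝ), (∀ t ≥ T, 0 < ω t ^ (-lam)) ∧
        StrictAntiOn (fun s : ℝ => ω s ^ (-lam)) (Set.Ici T)) ∧
    ∀ lam > (0:ℝ),
      (∃ C > (0:ℝ), ∃ T₀ : ℝ, ∀ t ≥ T₀,
        |deriv (fun s : ℝ => ω s ^ (-lam)) t| ≤ C * t⁻¹) ∧
      ∀ μ > (0:ℝ), ∃ C > (0:ℝ), ∃ T₀ : ℝ, ∀ t ≥ T₀,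
        |deriv (fun s : ℝ => ω s ^ (-lam)) t| ≤ C * ω t ^ (-μ) := by
  set u : ℝ → ℝ := fun t => Q₁.eval (t ^ β)
  have hωu : ω = logPoly A c ∘ u := funext hω
  have hd0 : Q₁.natDegree ≠ 0 := by omega
  have hu : Tendsto u atTop atTop :=
    (Q₁.tendsto_atTop_of_leadingCoeff_nonneg (Polynomial.natDegree_pos_iff_degree_pos.1 hd)
      hlc.le).comp (tendsto_rpow_atTop hβ)
  have hω' : ∀ᶠ t in atTop, c αs / 2 ≤ ω t ∧ ∃ ω', HasDerivAt ω ω' t ∧ 0 < ω' ∧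
      t * ω' ≤ β * (Q₁.natDegree + 1) * (4 * ∑ i, (αs i : ℝ)) * ω t := by
    filter_upwards [hu.eventually (eventually_hasDerivAt_logPoly_bounds hαsA hcαs hmax hdeg),
      Q₁.eventually_hasDerivAt_eval_rpow hd0 hlc hβ]
      with t ⟨hP, hP'pos, hP', hPb⟩ ⟨v, hv, hvpos, htv⟩
    rw [hωu]
    refine ⟨hPb, _, hP.comp t hv, mul_pos hP'pos hvpos, ?_⟩
    have : 0 ≤ β * (Q₁.natDegree + 1) := by positivity
    calc t * (logPolyDeriv A c (u t) * v) = logPolyDeriv A c (u t) * (t * v) := by ring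
      _ ≤ logPolyDeriv A c (u t) * (β * (Q₁.natDegree + 1) * u t) :=
          mul_le_mul_of_nonneg_left htv hP'pos.le
      _ ≤ _ := by simp only [Function.comp_apply]; nlinarith
  have hgrowth : ∀ μ > (0 : ℝ), ∀ᶠ t in atTop, ω t ^ μ ≤ t := fun μ hμ => by
    refine eventually_rpow_le_self (N := ∑ i, αs i) ?_
      (hω'.mono fun t h => (half_pos hcαs).le.trans h.1) hμ
    rw [hωu]
    exact ((logPoly_isBigO hαsA hcαs hmax).comp_tendsto hu).trans
      ((Q₁.isBigO_log_eval_rpow hd0 hlc hβ).pow _)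
  refine ⟨exists_deriv_pos_strictAntiOn_rpow_neg (hω'.mono fun t h => ?_),
    fun lam hlam => deriv_rpow_neg_bounds (half_pos hcαs) hω' hgrowth hlam⟩
  obtain ⟨hb, ω', hderiv, hpos, -⟩ := h
  exact ⟨(half_pos hcαs).trans_le hb, ω', hderiv, hpos⟩

theorem stmt7 (m : ℕ) (hm : 0 < m)
    (A : Finset (Fin m → ℕ)) (c : (Fin m → ℕ) → ℝ)
    (αs : Fin m → ℕ) (hαsA : αs ∈ A) (hcαs : 0 < c αs)
    (hdeg : 1 ≤ ∑ i, αs i)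
    (hmax : ∀ α ∈ A, c α ≠ 0 → α ≠ αs →
      ∃ i : Fin m, (∀ j : Fin m, j < i → α j = αs j) ∧ α i < αs i)
    (Q₁ : Polynomial ℝ) (hd : 1 ≤ Q₁.natDegree) (hlc : 0 < Q₁.leadingCoeff)
    (β : ℝ) (hβ : 0 < β)
    (ω : ℝ → ℝ)
    (hω : ∀ t : ℝ, ω t = ∑ α ∈ A, c α * ∏ i : Fin m,
      (iterLog ((i : ℕ) + 1) (Q₁.eval (t ^ β))) ^ (α i)) :
    (∃ T > (0:ℝ), (∀ t ≥ T, 0 < ω t) ∧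
      (∀ t ≥ T, DifferentiableAt ℝ ω t ∧ 0 < deriv ω t) ∧
      ∀ lam > (0:ℝ), (∀ t ≥ T, 0 < ω t ^ (-lam)) ∧
        StrictAntiOn (fun s : ℝ => ω s ^ (-lam)) (Set.Ici T)) ∧
    ∀ lam > (0:ℝ),
      (∃ C > (0:ℝ), ∃ T₀ : ℝ, ∀ t ≥ T₀,
        |deriv (fun s : ℝ => ω s ^ (-lam)) t| ≤ C * t⁻¹) ∧
      ∀ μ > (0:ℝ), ∃ C > (0:ℝ), ∃ T₀ : ℝ, ∀ t ≥ T₀,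
        |deriv (fun s : ℝ => ω s ^ (-lam)) t| ≤ C * ω t ^ (-μ) :=
  stmt7_general m A c αs hαsA hcαs hdeg hmax Q₁ hd hlc β hβ ω hω
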